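/- arXiv:1811.08640 — 5 statements merged into one kernel-verified Lean document; each statement's English description precedes it below -/
import Mathlib

section
/- Under the same setup as the single-block storage lemma, if additionally ṽ-passivity of f holds (v = -(∇f(x)-∇f(x*)) + ũ componentwise as defined), the total storage S := Σᵢ Sᵢ satisfies Ṡ ≤ x̃ᵀũ - Σᵢ(dᵢvᵢ² + Σ_{k≥2} δ_{ik}ξ_{ik}²) ≤ x̃ᵀũ, where δ_{ik} = a_{ik}/c_{ik} > 0. -/
/-!
Each block is a parallel interconnection of an integrator `ξ_{i0}`, first-order lags `ξ_{ik}` and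
a feedthrough `d_i`, and its storage satisfies
`Ṡ_i = (x_i - x*_i) v_i - (d_i v_i² + Σ_{k≥1} (a_{ik}/c_{ik}) ξ_{ik}²)`.
Summing over `i` and substituting `v = -(∇f(x) - ∇f(x*)) + ũ` leaves the extra term
`-⟪∇f(x) - ∇f(x*), x - x*⟫`, which is nonpositive because the gradient of a convex function is
monotone.
-/

open Finset

section ConvexGradient

variable {E : Type*} [NormedAddCommGroup E] [InnerProductSpace ℝ E] [CompleteSpace E]
  {f : E → ℝ} {gradf : E → E}

lemma ConvexOn.inner_gradient_le_sub (hf : ConvexOn ℝ Set.univ f) {p q : E}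
    (hp : HasGradientAt f (gradf p) p) :
    inner ℝ (gradf p) (q - p) ≤ f q - f p := by
  set line : ℝ →ᵃ[ℝ] E := AffineMap.lineMap p q
  have hconv : ConvexOn ℝ Set.univ (f ∘ line) := hf.comp_affineMap _
  have hderiv : HasDerivAt (f ∘ line) (inner ℝ (gradf p) (q - p)) 0 := by
    have hline : HasDerivAt line (q - p) 0 := AffineMap.hasDerivAt_lineMap
    have hp' : HasFDerivAt f (InnerProductSpace.toDual ℝ E (gradf p)) (line 0) := by
      simpa [line, AffineMap.lineMap_apply_zero] using hp.hasFDerivAt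
    simpa using hp'.comp_hasDerivAt (0 : ℝ) hline
  simpa [slope_def_field, line] using
    hconv.le_slope_of_hasDerivAt (Set.mem_univ 0) (Set.mem_univ 1) one_pos hderiv

lemma ConvexOn.inner_gradient_sub_nonneg (hf : ConvexOn ℝ Set.univ f)
    (hf' : ∀ x, HasGradientAt f (gradf x) x) (p q : E) :
    0 ≤ inner ℝ (gradf q - gradf p) (q - p) := by
  have hpq := hf.inner_gradient_le_sub (q := q) (hf' p)
  have hqp := hf.inner_gradient_le_sub (q := p) (hf' q)
  rw [← neg_sub q p, inner_neg_right] at hqp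
  rw [inner_sub_left]
  linarith

end ConvexGradient

section Block

variable {m : ℕ}

noncomputable def blockStorage (c : Fin (m + 1) → ℝ) (xs : ℝ) (ξ : Fin (m + 1) → ℝ → ℝ) (t : ℝ) :
    ℝ :=
  (1 / (2 * c 0)) * (ξ 0 t - xs) ^ 2 + ∑ k ∈ univ.erase 0, (1 / (2 * c k)) * (ξ k t) ^ 2

noncomputable def blockDissipation (a c : Fin (m + 1) → ℝ) (d v : ℝ) (ξ : Fin (m + 1) → ℝ) : ℝ :=
  d * v ^ 2 + ∑ k ∈ univ.erase 0, (a k / c k) * (ξ k) ^ 2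

lemma blockDissipation_nonneg {a c : Fin (m + 1) → ℝ} {d : ℝ} (v : ℝ) (ξ : Fin (m + 1) → ℝ)
    (ha : ∀ k, k ≠ 0 → 0 ≤ a k) (hc : ∀ k, 0 ≤ c k) (hd : 0 ≤ d) :
    0 ≤ blockDissipation a c d v ξ :=
  add_nonneg (mul_nonneg hd (sq_nonneg v)) <| sum_nonneg fun k hk =>
    mul_nonneg (div_nonneg (ha k (ne_of_mem_erase hk)) (hc k)) (sq_nonneg _)

lemma hasDerivAt_blockStorage {a c : Fin (m + 1) → ℝ} {d xs v t : ℝ}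
    {ξ : Fin (m + 1) → ℝ → ℝ} (hc : ∀ k, c k ≠ 0)
    (hdyn0 : HasDerivAt (ξ 0) (c 0 * v) t)
    (hdyn : ∀ k, k ≠ 0 → HasDerivAt (ξ k) (-a k * ξ k t + c k * v) t) :
    HasDerivAt (blockStorage c xs ξ)
      (((∑ k, ξ k t) + d * v - xs) * v - blockDissipation a c d v (fun k => ξ k t)) t := by
  have hint : HasDerivAt (fun t => 1 / (2 * c 0) * (ξ 0 t - xs) ^ 2) ((ξ 0 t - xs) * v) t := by
    refine (((hdyn0.sub_const xs).pow 2).const_mul (1 / (2 * c 0))).congr_deriv ?_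
    field_simp [hc 0]
    ring
  have hlag : ∀ k, k ≠ 0 → HasDerivAt (fun t => 1 / (2 * c k) * ξ k t ^ 2)
      (ξ k t * v - a k / c k * ξ k t ^ 2) t := fun k hk => by
    refine (((hdyn k hk).pow 2).const_mul (1 / (2 * c k))).congr_deriv ?_
    field_simp [hc k]
    ring
  refine (hint.add (HasDerivAt.fun_sum fun k hk => hlag k (ne_of_mem_erase hk))).congr_deriv ?_
  rw [← add_sum_erase univ _ (mem_univ 0), blockDissipation, sum_sub_distrib, ← sum_mul]
  ring

end Block

/-- Passivity of the whole primal block: with v = -(∇f(x) - ∇f(x*)) + ũ componentwise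
 and f convex, the total storage S = Σᵢ Sᵢ satisfies
 Ṡ ≤ x̃ᵀũ - Σᵢ(dᵢvᵢ² + Σ_{k≥2}δ_{ik}ξ_{ik}²) ≤ x̃ᵀũ. -/
theorem stmt_6 {n : ℕ} {N : Fin n → ℕ}
    (f : EuclideanSpace ℝ (Fin n) → ℝ)
    (gradf : EuclideanSpace ℝ (Fin n) → EuclideanSpace ℝ (Fin n))
    (hf : ConvexOn ℝ Set.univ f)
    (hf' : ∀ x, HasGradientAt f (gradf x) x)
    (xs : EuclideanSpace ℝ (Fin n))
    (c a : (i : Fin n) → Fin (N i + 1) → ℝ) (d : Fin n → ℝ)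
    (hc : ∀ i k, 0 < c i k) (ha : ∀ i k, k ≠ 0 → 0 < a i k) (hd : ∀ i, 0 ≤ d i)
    (v u : Fin n → ℝ → ℝ) (ξ : (i : Fin n) → Fin (N i + 1) → ℝ → ℝ)
    (x : ℝ → EuclideanSpace ℝ (Fin n))
    -- dynamics of each block and its output
    (hdyn0 : ∀ i t, HasDerivAt (ξ i 0) (c i 0 * v i t) t)
    (hdyn : ∀ i, ∀ k, k ≠ 0 → ∀ t, HasDerivAt (ξ i k) (-a i k * ξ i k t + c i k * v i t) t)
    (hx : ∀ i t, x t i = (∑ k, ξ i k t) + d i * v i t)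
    -- input decomposition: v = -(∇f(x) - ∇f(x*)) + ũ componentwise
    (hv : ∀ i t, v i t = -(gradf (x t) i - gradf xs i) + u i t)
    (S : ℝ → ℝ)
    (hS : ∀ t, S t = ∑ i, ((1 / (2 * c i 0)) * (ξ i 0 t - xs i) ^ 2
        + ∑ k ∈ univ.erase 0, (1 / (2 * c i k)) * (ξ i k t) ^ 2)) :
    ∀ t, ∃ D : ℝ, HasDerivAt S D t ∧
      D ≤ (∑ i, (x t i - xs i) * u i t)
          - ∑ i, (d i * (v i t) ^ 2 + ∑ k ∈ univ.erase 0, (a i k / c i k) * (ξ i k t) ^ 2) ∧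
      (∑ i, (x t i - xs i) * u i t)
          - (∑ i, (d i * (v i t) ^ 2 + ∑ k ∈ univ.erase 0, (a i k / c i k) * (ξ i k t) ^ 2))
        ≤ ∑ i, (x t i - xs i) * u i t := by
  intro t
  have hS_eq : S = fun t => ∑ i, blockStorage (c i) (xs i) (ξ i) t := funext hS
  have hderiv : HasDerivAt S (∑ i, (x t i - xs i) * v i t
      - ∑ i, (d i * (v i t) ^ 2 + ∑ k ∈ univ.erase 0, (a i k / c i k) * (ξ i k t) ^ 2)) t := by
    rw [hS_eq, ← sum_sub_distrib]
    refine HasDerivAt.fun_sum fun i _ => ?_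
    rw [hx i t]
    exact hasDerivAt_blockStorage (fun k => (hc i k).ne') (hdyn0 i t) (fun k hk => hdyn i k hk t)
  have hmono : 0 ≤ ∑ i, (x t i - xs i) * (gradf (x t) i - gradf xs i) := by
    simpa [PiLp.inner_apply, mul_comm] using hf.inner_gradient_sub_nonneg hf' xs (x t)
  have hsupply : ∑ i, (x t i - xs i) * v i t
      = ∑ i, (x t i - xs i) * u i t - ∑ i, (x t i - xs i) * (gradf (x t) i - gradf xs i) := by
    simp only [hv, ← sum_sub_distrib]
    exact sum_congr rfl fun i _ => by ring
  have hdiss : 0 ≤ ∑ i, (d i * (v i t) ^ 2 + ∑ k ∈ univ.erase 0, (a i k / c i k) * (ξ i k t) ^ 2) :=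
    sum_nonneg fun i _ => blockDissipation_nonneg _ _ (fun k hk => (ha i k hk).le)
      (fun k => (hc i k).le) (hd i)
  exact ⟨_, hderiv, by linarith, by linarith⟩
end

section
/- Consider the system ζ̇_{j1} = c̄_{j1}h_j, ζ̇_{jq} = -ā_{jq}ζ_{jq} + c̄_{jq}h_j (q = 2,…,r_j), μ_j = Σ_q ζ_{jq} + d̄_j h_j, where h = Ax - b and Ax* = b. Then W := Σ_j [(1/(2c̄_{j1}))|ζ_{j1} - μ_j*|² + Σ_{q≥2}(1/(2c̄_{jq}))ζ_{jq}²] satisfies Ẇ = (x - x*)ᵀAᵀ(μ - μ*) - Σ_j(d̄_j h_j² + Σ_{q≥2}(ā_{jq}/c̄_{jq})ζ_{jq}²) ≤ (x - x*)ᵀAᵀ(μ - μ*). -/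
open Finset

/-! Each block `j` of the storage is a sum of weighted squares whose time derivative, by the
dynamics, is `(ζ_{j1} - μ_j*) h_j + Σ_{q≥2} (ζ_{jq} h_j - (ā_{jq}/c̄_{jq}) ζ_{jq}²)`;
substituting `Σ_q ζ_{jq} = μ_j - d̄_j h_j` turns it into `h_j (μ_j - μ_j*)` minus the
nonnegative damping.
Summing over `j` and using `h = A (x - x*)` gives the supply rate `(x - x*)ᵀ Aᵀ (μ - μ*)`. -/

theorem HasDerivAt.div_two_mul_sq {f : ℝ → ℝ} {f' c t : ℝ} (hc : c ≠ 0)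
    (hf : HasDerivAt f f' t) :
    HasDerivAt (fun s => 1 / (2 * c) * f s ^ 2) (f t * f' / c) t :=
  ((hf.pow 2).const_mul (1 / (2 * c))).congr_deriv (by field_simp; ring)

theorem sum_mul_sum_transpose {ι κ R : Type*} [Fintype ι] [Fintype κ] [CommSemiring R]
    (A : κ → ι → R) (y : ι → R) (v : κ → R) :
    ∑ i, y i * ∑ j, A j i * v j = ∑ j, (∑ i, A j i * y i) * v j := by
  simp only [mul_sum, sum_mul]
  rw [sum_comm]
  exact sum_congr rfl fun _ _ => sum_congr rfl fun _ _ => by ring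

theorem hasDerivAt_storage_block {k : ℕ} {c a : Fin (k + 1) → ℝ} {d μs η m t : ℝ}
    {ζ : Fin (k + 1) → ℝ → ℝ} (hc : ∀ q, c q ≠ 0)
    (hdyn0 : HasDerivAt (ζ 0) (c 0 * η) t)
    (hdyn : ∀ q, q ≠ 0 → HasDerivAt (ζ q) (-a q * ζ q t + c q * η) t)
    (hm : m = (∑ q, ζ q t) + d * η) :
    HasDerivAt (fun s => 1 / (2 * c 0) * (ζ 0 s - μs) ^ 2
        + ∑ q ∈ univ.erase 0, 1 / (2 * c q) * (ζ q s) ^ 2)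
      (η * (m - μs) - (d * η ^ 2 + ∑ q ∈ univ.erase 0, (a q / c q) * (ζ q t) ^ 2)) t := by
  have hfirst := (hdyn0.sub_const μs).div_two_mul_sq (hc 0)
  have hrest : HasDerivAt (fun s => ∑ q ∈ univ.erase 0, 1 / (2 * c q) * ζ q s ^ 2)
      (∑ q ∈ univ.erase 0, (ζ q t * η - (a q / c q) * ζ q t ^ 2)) t :=
    HasDerivAt.fun_sum fun q hq =>
      ((hdyn q (mem_erase.mp hq).1).div_two_mul_sq (hc q)).congr_deriv
        (by field_simp [hc q]; ring)
  refine (hfirst.add hrest).congr_deriv ?_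
  rw [hm, ← add_sum_erase univ _ (mem_univ 0), sum_sub_distrib, ← sum_mul]
  field_simp [hc 0]
  ring

/-- Passivity of the equality-constraint dual block: with h = Ax - b and Ax* = b,
 the storage W satisfies Ẇ = (x-x*)ᵀAᵀ(μ-μ*) - damping ≤ (x-x*)ᵀAᵀ(μ-μ*). -/
theorem stmt_7 {n r : ℕ} {R : Fin r → ℕ}
    (A : Matrix (Fin r) (Fin n) ℝ) (b : Fin r → ℝ)
    (c a : (j : Fin r) → Fin (R j + 1) → ℝ) (d : Fin r → ℝ)
    (hc : ∀ j q, 0 < c j q) (ha : ∀ j q, q ≠ 0 → 0 < a j q) (hd : ∀ j, 0 ≤ d j)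
    (xs : Fin n → ℝ) (μs : Fin r → ℝ)
    (hxs : ∀ j, (∑ i, A j i * xs i) = b j)
    (x : ℝ → Fin n → ℝ) (h : Fin r → ℝ → ℝ)
    (hh : ∀ j t, h j t = (∑ i, A j i * x t i) - b j)
    (ζ : (j : Fin r) → Fin (R j + 1) → ℝ → ℝ) (μ : Fin r → ℝ → ℝ)
    (hdyn0 : ∀ j t, HasDerivAt (ζ j 0) (c j 0 * h j t) t)
    (hdyn : ∀ j, ∀ q, q ≠ 0 → ∀ t, HasDerivAt (ζ j q) (-a j q * ζ j q t + c j q * h j t) t)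
    (hμ : ∀ j t, μ j t = (∑ q, ζ j q t) + d j * h j t)
    (W : ℝ → ℝ)
    (hW : ∀ t, W t = ∑ j, ((1 / (2 * c j 0)) * (ζ j 0 t - μs j) ^ 2
        + ∑ q ∈ univ.erase 0, (1 / (2 * c j q)) * (ζ j q t) ^ 2)) :
    ∀ t, HasDerivAt W
        ((∑ i, (x t i - xs i) * (∑ j, A j i * (μ j t - μs j)))
          - ∑ j, (d j * (h j t) ^ 2
              + ∑ q ∈ univ.erase 0, (a j q / c j q) * (ζ j q t) ^ 2)) t ∧
      (∑ i, (x t i - xs i) * (∑ j, A j i * (μ j t - μs j)))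
          - (∑ j, (d j * (h j t) ^ 2
              + ∑ q ∈ univ.erase 0, (a j q / c j q) * (ζ j q t) ^ 2))
        ≤ ∑ i, (x t i - xs i) * (∑ j, A j i * (μ j t - μs j)) := by
  intro t
  have hresidual : ∀ j, ∑ i, A j i * (x t i - xs i) = h j t := fun j => by
    simp only [mul_sub, sum_sub_distrib, hxs, hh]
  have hsupply : ∑ i, (x t i - xs i) * (∑ j, A j i * (μ j t - μs j))
      = ∑ j, h j t * (μ j t - μs j) := by
    rw [sum_mul_sum_transpose A]
    simp only [hresidual]
  have hdamping : 0 ≤ ∑ j, (d j * (h j t) ^ 2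
      + ∑ q ∈ univ.erase 0, (a j q / c j q) * (ζ j q t) ^ 2) :=
    sum_nonneg fun j _ => add_nonneg (mul_nonneg (hd j) (sq_nonneg _)) <|
      sum_nonneg fun q hq =>
        mul_nonneg (div_nonneg (ha j q (mem_erase.mp hq).1).le (hc j q).le) (sq_nonneg _)
  refine ⟨?_, by linarith⟩
  rw [funext hW, hsupply, ← sum_sub_distrib]
  exact HasDerivAt.fun_sum fun j _ =>
    hasDerivAt_storage_block (fun q => (hc j q).ne') (hdyn0 j t) (fun q hq => hdyn j q hq t)
      (hμ j t)
end

section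
/- Let g : ℝⁿ → ℝᵐ have convex differentiable components, and let (x*, λ*) satisfy λ* ≥ 0, g(x*) ≤ 0, λ* ∘ g(x*) = 0. Then for any x ∈ ℝⁿ and λ ∈ ℝᵐ with λ ≥ 0: (λ - λ*)ᵀ g(x) ≤ (x - x*)ᵀ (∇g(x)λ - ∇g(x*)λ*). -/
/-! For each constraint `l`, the first-order characterisation of convexity, used at `x` and at
`x*`, squeezes `g_l(x) - g_l(x*)` between `⟪∇g_l(x*), x - x*⟫` and `⟪∇g_l(x), x - x*⟫`.
Weighting by `λ_l, λ*_l ≥ 0` and using `λ_l g_l(x*) ≤ 0 = λ*_l g_l(x*)` gives the inequality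
term by term; summing over `l` gives the claim. -/

open RealInnerProductSpace

theorem ConvexOn.add_le_of_hasFDerivWithinAt {E : Type*} [NormedAddCommGroup E] [NormedSpace ℝ E]
    {s : Set E} {f : E → ℝ} {f' : E →L[ℝ] ℝ} {x y : E} (hf : ConvexOn ℝ s f)
    (hx : x ∈ s) (hy : y ∈ s) (hf' : HasFDerivWithinAt f f' s x) :
    f x + f' (y - x) ≤ f y := by
  let L : ℝ →ᵃ[ℝ] E := AffineMap.lineMap x y
  have hL0 : L 0 = x := AffineMap.lineMap_apply_zero x y
  have hL1 : L 1 = y := AffineMap.lineMap_apply_one x y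
  have hφ' : HasDerivWithinAt (f ∘ L) (f' (y - x)) (L ⁻¹' s) 0 :=
    (hL0 ▸ hf').comp_hasDerivWithinAt (0 : ℝ) AffineMap.hasDerivWithinAt_lineMap
      (Set.mapsTo_preimage L s)
  -- the derivative of `f` along the segment at `x` is at most the secant slope `f y - f x`
  have hslope := (hf.comp_affineMap L).le_slope_of_hasDerivWithinAt
    (show (0 : ℝ) ∈ L ⁻¹' s by simpa [hL0]) (show (1 : ℝ) ∈ L ⁻¹' s by simpa [hL1]) one_pos hφ'
  rw [slope_def_field] at hslope
  simp only [Function.comp_apply, hL0, hL1, sub_zero, div_one] at hslope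
  linarith

theorem ConvexOn.add_inner_le_of_hasGradientWithinAt {E : Type*} [NormedAddCommGroup E]
    [InnerProductSpace ℝ E] [CompleteSpace E]
    {s : Set E} {f : E → ℝ} {f' x y : E} (hf : ConvexOn ℝ s f)
    (hx : x ∈ s) (hy : y ∈ s) (hf' : HasGradientWithinAt f f' s x) :
    f x + ⟪f', y - x⟫ ≤ f y :=
  hf.add_le_of_hasFDerivWithinAt hx hy (hasGradientWithinAt_iff_hasFDerivWithinAt.mp hf')

theorem HasGradientAt.hasGradientWithinAt {F : Type*} [NormedAddCommGroup F]
    [InnerProductSpace ℝ F] [CompleteSpace F] {f : F → ℝ} {f' x : F} {s : Set F}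
    (h : HasGradientAt f f' x) : HasGradientWithinAt f f' s x :=
  hasGradientWithinAt_iff_hasFDerivWithinAt.mpr
    (hasGradientAt_iff_hasFDerivAt.mp h).hasFDerivWithinAt

theorem ConvexOn.sub_mul_le_of_complementarySlackness {E : Type*} [NormedAddCommGroup E]
    [InnerProductSpace ℝ E] [CompleteSpace E] {s : Set E} {f : E → ℝ} {x xs fx fxs : E}
    {a b : ℝ} (hf : ConvexOn ℝ s f) (hx : x ∈ s) (hxs : xs ∈ s)
    (hfx : HasGradientWithinAt f fx s x) (hfxs : HasGradientWithinAt f fxs s xs)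
    (ha : 0 ≤ a) (hb : 0 ≤ b) (hfeas : f xs ≤ 0) (hslack : b * f xs = 0) :
    (a - b) * f x ≤ a * ⟪fx, x - xs⟫ - b * ⟪fxs, x - xs⟫ := by
  have hle_x : f x - f xs ≤ ⟪fx, x - xs⟫ := by
    have := hf.add_inner_le_of_hasGradientWithinAt hx hxs hfx
    rw [← neg_sub, inner_neg_right] at this
    linarith
  have hle_xs : ⟪fxs, x - xs⟫ ≤ f x - f xs := by
    linarith [hf.add_inner_le_of_hasGradientWithinAt hxs hx hfxs]
  linarith [mul_le_mul_of_nonneg_left hle_x ha, mul_le_mul_of_nonneg_left hle_xs hb,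
    mul_nonpos_of_nonneg_of_nonpos ha hfeas]

/-- Key estimate for the inequality-constraint dual block:
 (λ - λ*)ᵀg(x) ≤ (x - x*)ᵀ(∇g(x)λ - ∇g(x*)λ*). -/
theorem stmt_8 {n m : ℕ}
    (g : Fin m → EuclideanSpace ℝ (Fin n) → ℝ)
    (gradg : Fin m → EuclideanSpace ℝ (Fin n) → EuclideanSpace ℝ (Fin n))
    (hg : ∀ l, ConvexOn ℝ Set.univ (g l))
    (hg' : ∀ l x, HasGradientAt (g l) (gradg l x) x)
    (xs : EuclideanSpace ℝ (Fin n)) (lams : Fin m → ℝ)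
    (hlams : ∀ l, 0 ≤ lams l)
    (hineq : ∀ l, g l xs ≤ 0)
    (hcomp : ∀ l, lams l * g l xs = 0) :
    ∀ (x : EuclideanSpace ℝ (Fin n)) (lam : Fin m → ℝ), (∀ l, 0 ≤ lam l) →
      (∑ l, (lam l - lams l) * g l x)
        ≤ ∑ i, (x i - xs i) * ((∑ l, lam l * gradg l x i) - (∑ l, lams l * gradg l xs i)) := by
  intro x lam hlam
  have hrhs : ∑ i, (x i - xs i) * ((∑ l, lam l * gradg l x i) - (∑ l, lams l * gradg l xs i))
      = ∑ l, (lam l * ⟪gradg l x, x - xs⟫ - lams l * ⟪gradg l xs, x - xs⟫) := by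
    simp only [PiLp.inner_apply, PiLp.sub_apply, RCLike.inner_apply, conj_trivial,
      Finset.mul_sum, Finset.sum_sub_distrib, mul_sub]
    rw [Finset.sum_comm, Finset.sum_comm (γ := Fin n)]
    simp only [mul_left_comm]
  rw [hrhs]
  exact Finset.sum_le_sum fun l _ => (hg l).sub_mul_le_of_complementarySlackness trivial trivial
    (hg' l x).hasGradientWithinAt (hg' l xs).hasGradientWithinAt (hlam l) (hlams l) (hineq l)
    (hcomp l)
end

section
/- Consider the dual dynamics ρ̇_{l1} = [ĉ_{l1}w_l]⁺_{ρ_{l1}}, ρ̇_{lp} = [-â_{lp}ρ_{lp} + ĉ_{lp}w_l]⁺_{ρ_{lp}} (p = 2,…,m_l), λ_l = Σ_p ρ_{lp} + d̂_l·max{0, w_l}, with w = g(x), all ĉ_{lp} > 0, â_{lp} > 0 (p ≥ 2), d̂_l ≥ 0, and ρ(0) ≥ 0. Then along trajectories with ρ ≥ 0, U := Σ_l [(1/(2ĉ_{l1}))|ρ_{l1} - λ_l*|² + Σ_{p≥2}(1/(2ĉ_{lp}))ρ_{lp}²] satisfies U̇ ≤ (λ - λ*)ᵀg(x) - Σ_l(d̂_l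 max{0,w_l}² + Σ_{p≥2}(â_{lp}/ĉ_{lp})ρ_{lp}²). -/
open Finset

/-- The projection operator keeping the dual variable nonnegative. -/
noncomputable def proj (σ ρ : ℝ) : ℝ := if ρ = 0 ∧ σ < 0 then 0 else σ

/-!
The storage function is a sum of terms `(f t)² / (2c)` with derivative `f t · ḟ t / c`. For the
first dual variable of a block, the projection only ever increases the vector field, and it is
multiplied by `-λ* ≤ 0`; for the other ones the projection is invisible after multiplying by `ρ`,
since it acts only where `ρ = 0`. What is left is `(λ_l - λ*) w_l` minus the damping terms, once
`d max{0,w} · w = d max{0,w}²` is used.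
-/

lemma le_proj (σ ρ : ℝ) : σ ≤ proj σ ρ := by
  unfold proj
  split_ifs with h
  · exact h.2.le
  · exact le_rfl

lemma mul_proj (σ ρ : ℝ) : ρ * proj σ ρ = ρ * σ := by
  unfold proj
  split_ifs with h
  · simp [h.1]
  · rfl

lemma max_zero_mul_self {α : Type*} [Ring α] [LinearOrder α] [IsOrderedRing α] (w : α) :
    max 0 w * w = max 0 w ^ 2 := by
  rcases le_total 0 w with h | h
  · rw [max_eq_right h, sq]
  · rw [max_eq_left h, sq, zero_mul, zero_mul]

lemma sub_mul_proj_div_le {ρ μ c w : ℝ} (hμ : 0 ≤ μ) (hc : 0 < c) :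
    (ρ - μ) * proj (c * w) ρ / c ≤ (ρ - μ) * w := by
  rw [div_le_iff₀ hc]
  have hproj := mul_le_mul_of_nonneg_left (le_proj (c * w) ρ) hμ
  calc (ρ - μ) * proj (c * w) ρ = ρ * (c * w) - μ * proj (c * w) ρ := by rw [sub_mul, mul_proj]
    _ ≤ (ρ - μ) * w * c := by linarith

lemma mul_proj_div_eq {ρ a c w : ℝ} (hc : c ≠ 0) :
    ρ * proj (-a * ρ + c * w) ρ / c = ρ * w - a / c * ρ ^ 2 := by
  rw [mul_proj]
  field_simp
  ring

lemma HasDerivAt.half_sq_div {f : ℝ → ℝ} {f' t : ℝ} (hf : HasDerivAt f f' t) (c : ℝ) :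
    HasDerivAt (fun s => 1 / (2 * c) * f s ^ 2) (f t * f' / c) t := by
  refine ((hf.fun_pow 2).const_mul (1 / (2 * c))).congr_deriv ?_
  push_cast
  ring

/-- One constraint block `l`: `i₀` indexes `ρ_{l1}`, and `μ` stands for `λ_l*`. -/
lemma block_storage_deriv_le {ι : Type*} [Fintype ι] [DecidableEq ι] (i₀ : ι)
    (ρ c a : ι → ℝ) (μ d w : ℝ) (hμ : 0 ≤ μ) (hc : ∀ p, 0 < c p) :
    (ρ i₀ - μ) * proj (c i₀ * w) (ρ i₀) / c i₀
        + ∑ p ∈ univ.erase i₀, ρ p * proj (-a p * ρ p + c p * w) (ρ p) / c p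
      ≤ ((∑ p, ρ p) + d * max 0 w - μ) * w
        - (d * max 0 w ^ 2 + ∑ p ∈ univ.erase i₀, a p / c p * ρ p ^ 2) := by
  have hfirst := sub_mul_proj_div_le (ρ := ρ i₀) (w := w) hμ (hc i₀)
  have hrest : ∑ p ∈ univ.erase i₀, ρ p * proj (-a p * ρ p + c p * w) (ρ p) / c p
      = (∑ p ∈ univ.erase i₀, ρ p) * w - ∑ p ∈ univ.erase i₀, a p / c p * ρ p ^ 2 := by
    rw [sum_mul, ← sum_sub_distrib]
    exact sum_congr rfl fun p _ => mul_proj_div_eq (hc p).ne'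
  rw [hrest, ← add_sum_erase univ ρ (mem_univ i₀)]
  linear_combination hfirst - d * max_zero_mul_self w

theorem stmt_10_general {n m : ℕ} {M : Fin m → ℕ}
    (g : Fin m → EuclideanSpace ℝ (Fin n) → ℝ)
    (lams : Fin m → ℝ)
    (hlams : ∀ l, 0 ≤ lams l)
    (c a : (l : Fin m) → Fin (M l + 1) → ℝ) (d : Fin m → ℝ)
    (hc : ∀ l p, 0 < c l p)
    (x : ℝ → EuclideanSpace ℝ (Fin n)) (w : Fin m → ℝ → ℝ)
    (hw : ∀ l t, w l t = g l (x t))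
    (ρ : (l : Fin m) → Fin (M l + 1) → ℝ → ℝ) (lam : Fin m → ℝ → ℝ)
    (hdyn0 : ∀ l t, HasDerivAt (ρ l 0) (proj (c l 0 * w l t) (ρ l 0 t)) t)
    (hdyn : ∀ l, ∀ p, p ≠ 0 → ∀ t,
      HasDerivAt (ρ l p) (proj (-a l p * ρ l p t + c l p * w l t) (ρ l p t)) t)
    (hlam : ∀ l t, lam l t = (∑ p, ρ l p t) + d l * max 0 (w l t))
    (U : ℝ → ℝ)
    (hU : ∀ t, U t = ∑ l, ((1 / (2 * c l 0)) * (ρ l 0 t - lams l) ^ 2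
        + ∑ p ∈ univ.erase 0, (1 / (2 * c l p)) * (ρ l p t) ^ 2)) :
    ∀ t, ∃ D : ℝ, HasDerivAt U D t ∧
      D ≤ (∑ l, (lam l t - lams l) * g l (x t))
          - ∑ l, (d l * (max 0 (w l t)) ^ 2
              + ∑ p ∈ univ.erase 0, (a l p / c l p) * (ρ l p t) ^ 2) := by
  intro t
  refine ⟨∑ l, ((ρ l 0 t - lams l) * proj (c l 0 * w l t) (ρ l 0 t) / c l 0
      + ∑ p ∈ univ.erase 0,
          ρ l p t * proj (-a l p * ρ l p t + c l p * w l t) (ρ l p t) / c l p), ?_, ?_⟩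
  · rw [funext hU]
    exact HasDerivAt.fun_sum fun l _ =>
      (((hdyn0 l t).sub_const (lams l)).half_sq_div _).add <| HasDerivAt.fun_sum fun p hp =>
        (hdyn l p (ne_of_mem_erase hp) t).half_sq_div _
  · rw [← sum_sub_distrib]
    gcongr with l
    rw [hlam, ← hw]
    exact block_storage_deriv_le 0 (ρ l · t) (c l) (a l) (lams l) (d l) (w l t) (hlams l) (hc l)

/-- Passivity estimate for the inequality-constraint dual block: along trajectories
 with ρ ≥ 0, the storage U satisfies
 U̇ ≤ (λ - λ*)ᵀ g(x) - Σ_l (d̂_l max{0,w_l}² + Σ_{p≥2} (â_{lp}/ĉ_{lp}) ρ_{lp}²). -/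
theorem stmt_10 {n m : ℕ} {M : Fin m → ℕ}
    (g : Fin m → EuclideanSpace ℝ (Fin n) → ℝ)
    (gradg : Fin m → EuclideanSpace ℝ (Fin n) → EuclideanSpace ℝ (Fin n))
    (hg : ∀ l, ConvexOn ℝ Set.univ (g l))
    (hg' : ∀ l x, HasGradientAt (g l) (gradg l x) x)
    (xs : EuclideanSpace ℝ (Fin n)) (lams : Fin m → ℝ)
    (hlams : ∀ l, 0 ≤ lams l) (hineqs : ∀ l, g l xs ≤ 0) (hcomp : ∀ l, lams l * g l xs = 0)
    (c a : (l : Fin m) → Fin (M l + 1) → ℝ) (d : Fin m → ℝ)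
    (hc : ∀ l p, 0 < c l p) (ha : ∀ l p, p ≠ 0 → 0 < a l p) (hd : ∀ l, 0 ≤ d l)
    (x : ℝ → EuclideanSpace ℝ (Fin n)) (w : Fin m → ℝ → ℝ)
    (hw : ∀ l t, w l t = g l (x t))
    (ρ : (l : Fin m) → Fin (M l + 1) → ℝ → ℝ) (lam : Fin m → ℝ → ℝ)
    (hρpos : ∀ l p t, 0 ≤ ρ l p t)
    (hdyn0 : ∀ l t, HasDerivAt (ρ l 0) (proj (c l 0 * w l t) (ρ l 0 t)) t)
    (hdyn : ∀ l, ∀ p, p ≠ 0 → ∀ t,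
      HasDerivAt (ρ l p) (proj (-a l p * ρ l p t + c l p * w l t) (ρ l p t)) t)
    (hlam : ∀ l t, lam l t = (∑ p, ρ l p t) + d l * max 0 (w l t))
    (U : ℝ → ℝ)
    (hU : ∀ t, U t = ∑ l, ((1 / (2 * c l 0)) * (ρ l 0 t - lams l) ^ 2
        + ∑ p ∈ univ.erase 0, (1 / (2 * c l p)) * (ρ l p t) ^ 2)) :
    ∀ t, ∃ D : ℝ, HasDerivAt U D t ∧
      D ≤ (∑ l, (lam l t - lams l) * g l (x t))
          - ∑ l, (d l * (max 0 (w l t)) ^ 2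
              + ∑ p ∈ univ.erase 0, (a l p / c l p) * (ρ l p t) ^ 2) :=
  stmt_10_general g lams hlams c a d hc x w hw ρ lam hdyn0 hdyn hlam U hU
end

section
/- Suppose along a trajectory of the generalized primal-dual dynamics the identities d_i v_i² + Σ_{k≥2} δ_{ik}ξ_{ik}² ≡ 0 hold for all i, where each transfer function M_i has d_i > 0 or n_i ≥ 2 (i.e., has a stable zero). Then v_i ≡ 0 for all i; consequently ∇f(x) + ∇g(x)λ + Aᵀμ ≡ 0 and each ξ_{i1} and x_i is constant along the trajectory. -/
open Finset

/-- Invariant-set extraction for the primal block: if the damping terms vanish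
 identically along a trajectory and every transfer function M_i has a stable zero
 (d_i > 0 or n_i ≥ 2), then v ≡ 0, the stationarity condition
 ∇f(x) + ∇g(x)λ + Aᵀμ ≡ 0 holds, and each ξ_{i1} and x_i is constant. -/
theorem stmt_12 {n r m : ℕ} {N : Fin n → ℕ}
    (f : EuclideanSpace ℝ (Fin n) → ℝ)
    (gradf : EuclideanSpace ℝ (Fin n) → EuclideanSpace ℝ (Fin n))
    (g : Fin m → EuclideanSpace ℝ (Fin n) → ℝ)
    (gradg : Fin m → EuclideanSpace ℝ (Fin n) → EuclideanSpace ℝ (Fin n))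
    (A : Matrix (Fin r) (Fin n) ℝ)
    (hf' : ∀ x, HasGradientAt f (gradf x) x)
    (hg' : ∀ l x, HasGradientAt (g l) (gradg l x) x)
    (c a : (i : Fin n) → Fin (N i + 1) → ℝ) (d : Fin n → ℝ)
    (hc : ∀ i k, 0 < c i k) (ha : ∀ i k, k ≠ 0 → 0 < a i k) (hd : ∀ i, 0 ≤ d i)
    -- each M_i(s) has one or more stable zeros
    (hzero : ∀ i, 0 < d i ∨ 1 ≤ N i)
    (x : ℝ → EuclideanSpace ℝ (Fin n)) (μ : Fin r → ℝ → ℝ) (lam : Fin m → ℝ → ℝ)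
    (ξ : (i : Fin n) → Fin (N i + 1) → ℝ → ℝ) (v : Fin n → ℝ → ℝ)
    (hv : ∀ i t, v i t = -(gradf (x t) i + (∑ l, lam l t * gradg l (x t) i)
        + (∑ j, A j i * μ j t)))
    (hdyn0 : ∀ i t, HasDerivAt (ξ i 0) (c i 0 * v i t) t)
    (hdyn : ∀ i, ∀ k, k ≠ 0 → ∀ t, HasDerivAt (ξ i k) (-a i k * ξ i k t + c i k * v i t) t)
    (hx : ∀ i t, x t i = (∑ k, ξ i k t) + d i * v i t)
    -- the damping terms vanish identically along the trajectory
    (hdamp : ∀ i t, d i * (v i t) ^ 2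
        + (∑ k ∈ univ.erase 0, (a i k / c i k) * (ξ i k t) ^ 2) = 0) :
    (∀ i t, v i t = 0) ∧
    (∀ i t, gradf (x t) i + (∑ l, lam l t * gradg l (x t) i) + (∑ j, A j i * μ j t) = 0) ∧
    (∀ i t t', ξ i 0 t = ξ i 0 t') ∧
    (∀ i t t', x t i = x t' i) := by
    -- Each damping summand vanishes
  have hterm : ∀ i t, d i * (v i t) ^ 2 = 0 ∧
      ∀ k ∈ univ.erase (0 : Fin (N i + 1)), (a i k / c i k) * (ξ i k t) ^ 2 = 0 := by
    intro i t
    have hnn : ∀ k ∈ univ.erase (0 : Fin (N i + 1)), 0 ≤ (a i k / c i k) * (ξ i k t) ^ 2 := by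
      intro k hk
      have hk0 : k ≠ 0 := (Finset.mem_erase.mp hk).1
      exact mul_nonneg (div_nonneg (ha i k hk0).le (hc i k).le) (sq_nonneg _)
    have hS : 0 ≤ ∑ k ∈ univ.erase (0 : Fin (N i + 1)), (a i k / c i k) * (ξ i k t) ^ 2 :=
      Finset.sum_nonneg hnn
    have hD : 0 ≤ d i * (v i t) ^ 2 := mul_nonneg (hd i) (sq_nonneg _)
    have h := hdamp i t
    have hd0 : d i * (v i t) ^ 2 = 0 := by linarith
    have hS0 : (∑ k ∈ univ.erase (0 : Fin (N i + 1)), (a i k / c i k) * (ξ i k t) ^ 2) = 0 := by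
      linarith
    exact ⟨hd0, (Finset.sum_eq_zero_iff_of_nonneg hnn).mp hS0⟩
  -- ξ i k ≡ 0 for k ≠ 0
  have hxi0 : ∀ i k, k ≠ 0 → ∀ t, ξ i k t = 0 := by
    intro i k hk t
    have h := (hterm i t).2 k (Finset.mem_erase.mpr ⟨hk, Finset.mem_univ k⟩)
    have hac : 0 < a i k / c i k := div_pos (ha i k hk) (hc i k)
    have : (ξ i k t) ^ 2 = 0 := by
      rcases mul_eq_zero.mp h with h' | h'
      · exact absurd h' hac.ne'
      · exact h'
    exact pow_eq_zero_iff (by norm_num) |>.mp this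
  -- v ≡ 0
  have hv0 : ∀ i t, v i t = 0 := by
    intro i t
    rcases hzero i with hdi | hNi
    · have h := (hterm i t).1
      have : (v i t) ^ 2 = 0 := by
        rcases mul_eq_zero.mp h with h' | h'
        · exact absurd h' hdi.ne'
        · exact h'
      exact pow_eq_zero_iff (by norm_num) |>.mp this
    · -- use k = 1
      have h1 : (1 : Fin (N i + 1)) ≠ 0 := by
        have : (1 : ℕ) < N i + 1 := by omega
        exact Fin.ne_of_val_ne (by simp [Fin.val_one', Nat.mod_eq_of_lt this])
      have hconst : ξ i 1 = fun _ => 0 := funext (hxi0 i 1 h1)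
      have hder : HasDerivAt (ξ i 1) 0 t := by
        rw [hconst]; exact hasDerivAt_const t 0
      have h2 := hdyn i 1 h1 t
      have : -a i 1 * ξ i 1 t + c i 1 * v i t = 0 := h2.unique hder
      rw [hxi0 i 1 h1 t] at this
      have hcv : c i 1 * v i t = 0 := by linarith
      rcases mul_eq_zero.mp hcv with h' | h'
      · exact absurd h' (hc i 1).ne'
      · exact h'
  refine ⟨hv0, ?_, ?_, ?_⟩
  · intro i t
    have := hv i t
    rw [hv0 i t] at this
    linarith
  · intro i t t'
    have hdiff : Differentiable ℝ (ξ i 0) := fun t => (hdyn0 i t).differentiableAt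
    have hderiv : ∀ s, deriv (ξ i 0) s = 0 := by
      intro s
      have := (hdyn0 i s).deriv
      rw [hv0 i s, mul_zero] at this
      exact this
    exact is_const_of_deriv_eq_zero hdiff hderiv t t'
  · intro i t t'
    have hxi : ∀ s, x s i = ξ i 0 s := by
      intro s
      rw [hx i s, hv0 i s, mul_zero, add_zero]
      rw [Fin.sum_univ_succAbove _ 0]
      have : ∀ k : Fin (N i), ξ i ((0 : Fin (N i + 1)).succAbove k) s = 0 := by
        intro k
        exact hxi0 i _ (Fin.succAbove_ne 0 k) s
      simp only [Fin.zero_succAbove] at this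
      simp [this]
    rw [hxi t, hxi t']
    have hdiff : Differentiable ℝ (ξ i 0) := fun t => (hdyn0 i t).differentiableAt
    have hderiv : ∀ s, deriv (ξ i 0) s = 0 := by
      intro s
      have := (hdyn0 i s).deriv
      rw [hv0 i s, mul_zero] at this
      exact this
    exact is_const_of_deriv_eq_zero hdiff hderiv t t'
end
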